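/- For every c > 0, writing A = A(c) and ȳ = ȳ(c), one has φ_A(x_v + ȳ) = φ_A(x_v − ȳ) = φ_A(x_v) − c, and for every x ∈ ℝ with 0 < |x − x_v| < ȳ, φ_A(x_v) − c < φ_A(x) < φ_A(x_v). In particular, on the interval [x_v − ȳ, x_v + ȳ], φ_A attains its maximum value φ_A(x_v) only at x_v and its minimum value φ_A(x_v) − c only at the two endpoints. -/

import Mathlib

/-!
Writing `y = x - x_v`, one has `φ_A(x) - φ_A(x_v) = ψ(y) := 2A(cosh θy - 1) - k₂ y²`, an even
function with `ψ' = h_A`. Since `A, θ > 0`, `h_A' = 2Aθ² cosh θy - 2k₂` increases strictly on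
`[0, ∞)`, so `h_A` is strictly convex there; as it vanishes at `0` and at `ȳ`, it is negative on
`(0, ȳ)`. Hence `ψ` decreases strictly on `[0, ȳ]` from `ψ(0) = 0` to `ψ(ȳ) = -g(A) = -c`.
-/

/-- `h_A(y) = A θ e^{θ y} − A θ e^{−θ y} − 2 k₂ y`. -/
noncomputable def hFun (θ k₂ A y : ℝ) : ℝ :=
  A * θ * Real.exp (θ * y) - A * θ * Real.exp (-(θ * y)) - 2 * k₂ * y

/-- `g(A) = −A e^{θ ȳ(A)} − A e^{−θ ȳ(A)} + k₂ ȳ(A)² + 2A`. -/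
noncomputable def gFun (θ k₂ : ℝ) (ybar : ℝ → ℝ) (A : ℝ) : ℝ :=
  -A * Real.exp (θ * ybar A) - A * Real.exp (-(θ * ybar A)) + k₂ * (ybar A) ^ 2 + 2 * A

/-- `φ_A(x) = A e^{θ(x−x_v)} + A e^{−θ(x−x_v)} − k₂ (x−x_v)² + k₀`. -/
noncomputable def phiFun (θ k₂ k₀ xv A x : ℝ) : ℝ :=
  A * Real.exp (θ * (x - xv)) + A * Real.exp (-(θ * (x - xv))) - k₂ * (x - xv) ^ 2 + k₀

open Real Set

section RadialProfile

variable {φ ψ : ℝ → ℝ} {x₀ Y c : ℝ}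

lemma radial_apply_eq_sub (hφ : ∀ x, φ x = φ x₀ + ψ |x - x₀|) (hψY : ψ Y = -c) {x : ℝ}
    (hx : |x - x₀| = Y) : φ x = φ x₀ - c := by
  rw [hφ, hx, hψY, sub_eq_add_neg]

lemma radial_apply_mem_Ioo (hφ : ∀ x, φ x = φ x₀ + ψ |x - x₀|)
    (hψ : StrictAntiOn ψ (Icc 0 Y)) (hψ0 : ψ 0 = 0) (hψY : ψ Y = -c) {x : ℝ}
    (hx : |x - x₀| ∈ Ioo 0 Y) : φ x ∈ Ioo (φ x₀ - c) (φ x₀) := by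
  have hmem : |x - x₀| ∈ Icc 0 Y := Ioo_subset_Icc_self hx
  have hY : Y ∈ Icc 0 Y := right_mem_Icc.2 (hx.1.trans hx.2).le
  have hlt0 := hψ (left_mem_Icc.2 hY.1) hmem hx.1
  have hltY := hψ hmem hY hx.2
  rw [hφ x]
  constructor <;> linarith

lemma radial_extrema_of_mem_Icc (hφ : ∀ x, φ x = φ x₀ + ψ |x - x₀|)
    (hψ : StrictAntiOn ψ (Icc 0 Y)) (hψ0 : ψ 0 = 0) (hψY : ψ Y = -c) {x : ℝ}
    (hx : x ∈ Icc (x₀ - Y) (x₀ + Y)) :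
    φ x ≤ φ x₀ ∧ (φ x = φ x₀ → x = x₀) ∧ φ x₀ - c ≤ φ x ∧
      (φ x = φ x₀ - c → x = x₀ - Y ∨ x = x₀ + Y) := by
  have hmem : |x - x₀| ∈ Icc 0 Y :=
    ⟨abs_nonneg _, abs_sub_le_iff.2 ⟨by linarith [hx.2], by linarith [hx.1]⟩⟩
  have hY0 : 0 ≤ Y := hmem.1.trans hmem.2
  have h0 : (0 : ℝ) ∈ Icc 0 Y := left_mem_Icc.2 hY0
  have hY : Y ∈ Icc 0 Y := right_mem_Icc.2 hY0
  rw [hφ x]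
  refine ⟨?_, fun h => ?_, ?_, fun h => ?_⟩
  · linarith [(hψ.le_iff_ge hmem h0).2 hmem.1]
  · have := hψ.injOn hmem h0 (by linarith)
    linarith [sub_eq_zero.1 (abs_eq_zero.1 this)]
  · linarith [(hψ.le_iff_ge hY hmem).2 hmem.2]
  · rcases (abs_eq hY0).1 (hψ.injOn hmem hY (by linarith)) with h | h
    · right; linarith
    · left; linarith

end RadialProfile

noncomputable def psiFun (θ k₂ A y : ℝ) : ℝ :=
  2 * A * (cosh (θ * y) - 1) - k₂ * y ^ 2

section Profile

variable {θ k₂ A : ℝ}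

lemma hFun_eq_sinh (θ k₂ A y : ℝ) :
    hFun θ k₂ A y = 2 * A * θ * sinh (θ * y) - 2 * k₂ * y := by
  rw [hFun, sinh_eq]; ring

lemma hFun_zero : hFun θ k₂ A 0 = 0 := by
  simp [hFun]

lemma hasDerivAt_hFun (y : ℝ) :
    HasDerivAt (hFun θ k₂ A) (2 * A * θ ^ 2 * cosh (θ * y) - 2 * k₂) y := by
  rw [show hFun θ k₂ A = _ from funext (hFun_eq_sinh θ k₂ A)]
  exact ((((hasDerivAt_id' y).const_mul θ).sinh).const_mul (2 * A * θ)).sub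
    ((hasDerivAt_id' y).const_mul (2 * k₂)) |>.congr_deriv (by ring)

lemma strictConvexOn_hFun (hA : 0 < A) (hθ : 0 < θ) :
    StrictConvexOn ℝ (Ici 0) (hFun θ k₂ A) := by
  refine StrictMonoOn.strictConvexOn_of_deriv (convex_Ici 0)
    (fun y _ => (hasDerivAt_hFun y).continuousAt.continuousWithinAt) ?_
  rw [interior_Ici]
  intro y hy z hz hyz
  have hcosh : cosh (θ * y) < cosh (θ * z) := by
    rw [cosh_lt_cosh, abs_of_pos (mul_pos hθ hy), abs_of_pos (mul_pos hθ hz)]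
    exact mul_lt_mul_of_pos_left hyz hθ
  simp only [(hasDerivAt_hFun _).deriv]
  gcongr

lemma hFun_neg_of_mem_Ioo (hA : 0 < A) (hθ : 0 < θ) {Y y : ℝ} (hY : hFun θ k₂ A Y = 0)
    (hy : y ∈ Ioo 0 Y) : hFun θ k₂ A y < 0 := by
  have hY0 : 0 < Y := hy.1.trans hy.2
  have h := (strictConvexOn_hFun (k₂ := k₂) hA hθ).lt_on_openSegment self_mem_Ici
    (mem_Ici.2 hY0.le) hY0.ne (by rwa [openSegment_eq_Ioo hY0])
  rwa [hFun_zero, hY, max_self] at h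

lemma hasDerivAt_psiFun (y : ℝ) : HasDerivAt (psiFun θ k₂ A) (hFun θ k₂ A y) y := by
  rw [hFun_eq_sinh]
  exact (((((hasDerivAt_id' y).const_mul θ).cosh).sub_const 1).const_mul (2 * A)).sub
    ((hasDerivAt_pow 2 y).const_mul k₂) |>.congr_deriv (by push_cast; ring)

lemma strictAntiOn_psiFun (hA : 0 < A) (hθ : 0 < θ) {Y : ℝ} (hY : hFun θ k₂ A Y = 0) :
    StrictAntiOn (psiFun θ k₂ A) (Icc 0 Y) := by
  refine strictAntiOn_of_deriv_neg (convex_Icc 0 Y)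
    (fun y _ => (hasDerivAt_psiFun y).continuousAt.continuousWithinAt) fun y hy => ?_
  rw [interior_Icc] at hy
  rw [(hasDerivAt_psiFun y).deriv]
  exact hFun_neg_of_mem_Ioo hA hθ hY hy

lemma psiFun_zero : psiFun θ k₂ A 0 = 0 := by
  simp [psiFun]

lemma psiFun_eq_neg_gFun (ybar : ℝ → ℝ) : psiFun θ k₂ A (ybar A) = -gFun θ k₂ ybar A := by
  rw [psiFun, gFun, cosh_eq]; ring

lemma psiFun_abs (y : ℝ) : psiFun θ k₂ A |y| = psiFun θ k₂ A y := by
  rcases abs_choice y with h | h <;> simp [h, psiFun, cosh_neg]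

lemma phiFun_eq_add_psiFun_abs (k₀ xv x : ℝ) :
    phiFun θ k₂ k₀ xv A x = phiFun θ k₂ k₀ xv A xv + psiFun θ k₂ A |x - xv| := by
  rw [psiFun_abs, phiFun, phiFun, psiFun, cosh_eq]
  simp only [sub_self, mul_zero, neg_zero, exp_zero]
  ring

end Profile

theorem stmt_18_general (ρ σ θ k₂ k₀ xv : ℝ)
    (hρ : 0 < ρ) (hσ : 0 < σ)
    (hθ : θ = Real.sqrt (2 * ρ) / σ)
    (ybarA : ℝ → ℝ)
    (hybarA : ∀ A : ℝ, 0 < A → A < k₂ / θ ^ 2 →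
      0 < ybarA A ∧ hFun θ k₂ A (ybarA A) = 0)
    (Ac : ℝ → ℝ)
    (hAc : ∀ c : ℝ, 0 < c →
      0 < Ac c ∧ Ac c < k₂ / θ ^ 2 ∧ gFun θ k₂ ybarA (Ac c) = c) :
    ∀ c : ℝ, 0 < c →
      phiFun θ k₂ k₀ xv (Ac c) (xv + ybarA (Ac c)) = phiFun θ k₂ k₀ xv (Ac c) xv - c ∧
      phiFun θ k₂ k₀ xv (Ac c) (xv - ybarA (Ac c)) = phiFun θ k₂ k₀ xv (Ac c) xv - c ∧
      (∀ x : ℝ, 0 < |x - xv| → |x - xv| < ybarA (Ac c) →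
        phiFun θ k₂ k₀ xv (Ac c) xv - c < phiFun θ k₂ k₀ xv (Ac c) x ∧
        phiFun θ k₂ k₀ xv (Ac c) x < phiFun θ k₂ k₀ xv (Ac c) xv) ∧
      (∀ x ∈ Set.Icc (xv - ybarA (Ac c)) (xv + ybarA (Ac c)),
        phiFun θ k₂ k₀ xv (Ac c) x ≤ phiFun θ k₂ k₀ xv (Ac c) xv ∧
        (phiFun θ k₂ k₀ xv (Ac c) x = phiFun θ k₂ k₀ xv (Ac c) xv → x = xv) ∧
        phiFun θ k₂ k₀ xv (Ac c) xv - c ≤ phiFun θ k₂ k₀ xv (Ac c) x ∧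
        (phiFun θ k₂ k₀ xv (Ac c) x = phiFun θ k₂ k₀ xv (Ac c) xv - c →
          x = xv - ybarA (Ac c) ∨ x = xv + ybarA (Ac c))) := by
  intro c hc
  obtain ⟨hA0, hAlt, hgc⟩ := hAc c hc
  obtain ⟨hY0, hY⟩ := hybarA _ hA0 hAlt
  have hθ0 : 0 < θ := hθ ▸ div_pos (sqrt_pos.2 (by positivity)) hσ
  have hφ := phiFun_eq_add_psiFun_abs (θ := θ) (k₂ := k₂) (A := Ac c) k₀ xv
  have hψ := strictAntiOn_psiFun (k₂ := k₂) hA0 hθ0 hY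
  have hψY : psiFun θ k₂ (Ac c) (ybarA (Ac c)) = -c := by rw [psiFun_eq_neg_gFun, hgc]
  refine ⟨radial_apply_eq_sub hφ hψY ?_, radial_apply_eq_sub hφ hψY ?_,
    fun x h0 hlt => radial_apply_mem_Ioo hφ hψ psiFun_zero hψY ⟨h0, hlt⟩,
    fun x hx => radial_extrema_of_mem_Icc hφ hψ psiFun_zero hψY hx⟩
  · rw [add_sub_cancel_left, abs_of_pos hY0]
  · rw [sub_sub_cancel_left, abs_neg, abs_of_pos hY0]

theorem stmt_18 (ρ σ Δ b θ k₂ k₀ α xv yv : ℝ)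
    (hρ : 0 < ρ) (hσ : 0 < σ) (hΔ : 0 < Δ) (hb : 0 ≤ b)
    (hθ : θ = Real.sqrt (2 * ρ) / σ)
    (hα : α = (Δ + b) / Δ ^ 2)
    (hxv : xv = Δ * (Δ + 2 * b) / (2 * (Δ + b)))
    (hyv : yv = Δ ^ 2 / (4 * (Δ + b)))
    (hk₂ : k₂ = α / ρ)
    (hk₀ : k₀ = yv / ρ - 2 * k₂ / θ ^ 2)
    (ybarA : ℝ → ℝ)
    (hybarA : ∀ A : ℝ, 0 < A → A < k₂ / θ ^ 2 →
      0 < ybarA A ∧ hFun θ k₂ A (ybarA A) = 0)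
    (Ac : ℝ → ℝ)
    (hAc : ∀ c : ℝ, 0 < c →
      0 < Ac c ∧ Ac c < k₂ / θ ^ 2 ∧ gFun θ k₂ ybarA (Ac c) = c) :
    ∀ c : ℝ, 0 < c →
      phiFun θ k₂ k₀ xv (Ac c) (xv + ybarA (Ac c)) = phiFun θ k₂ k₀ xv (Ac c) xv - c ∧
      phiFun θ k₂ k₀ xv (Ac c) (xv - ybarA (Ac c)) = phiFun θ k₂ k₀ xv (Ac c) xv - c ∧
      (∀ x : ℝ, 0 < |x - xv| → |x - xv| < ybarA (Ac c) →
        phiFun θ k₂ k₀ xv (Ac c) xv - c < phiFun θ k₂ k₀ xv (Ac c) x ∧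
        phiFun θ k₂ k₀ xv (Ac c) x < phiFun θ k₂ k₀ xv (Ac c) xv) ∧
      (∀ x ∈ Set.Icc (xv - ybarA (Ac c)) (xv + ybarA (Ac c)),
        phiFun θ k₂ k₀ xv (Ac c) x ≤ phiFun θ k₂ k₀ xv (Ac c) xv ∧
        (phiFun θ k₂ k₀ xv (Ac c) x = phiFun θ k₂ k₀ xv (Ac c) xv → x = xv) ∧
        phiFun θ k₂ k₀ xv (Ac c) xv - c ≤ phiFun θ k₂ k₀ xv (Ac c) x ∧
        (phiFun θ k₂ k₀ xv (Ac c) x = phiFun θ k₂ k₀ xv (Ac c) xv - c →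
          x = xv - ybarA (Ac c) ∨ x = xv + ybarA (Ac c))) :=
  stmt_18_general ρ σ θ k₂ k₀ xv hρ hσ hθ ybarA hybarA Ac hAc
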